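/- arXiv:1804.03752 — 5 statements merged into one kernel-verified Lean document; each statement's English description precedes it below -/
import Mathlib

section
/- If G is a triangle-free graph with spectral radius μ and smallest eigenvalue μₙ, then s⁻ ≥ μ³/|μₙ| ≥ μ², where s⁻ is the sum of squares of the negative eigenvalues of the adjacency matrix. -/
/-!
Triangle-freeness kills the diagonal of `A³`, so `∑ λᵢ³ = tr A³ = 0` and the cube of the spectral
radius is paid for by the negative eigenvalues: `μ³ ≤ -∑_{λᵢ<0} λᵢ³ ≤ |μₙ| s⁻`. For the second
inequality, `|μₙ| ≤ μ` because `A` is entrywise nonnegative: replacing a unit `μₙ`-eigenvector `v`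
by `|v|` gives `|μₙ| = |vᵀAv| ≤ |v|ᵀA|v| ≤ μ`.
-/

open Finset Matrix

namespace Matrix

variable {n : Type*} [Fintype n]

lemma abs_dotProduct_mulVec_le_of_nonneg {A : Matrix n n ℝ} (hA : ∀ i j, 0 ≤ A i j)
    (x : n → ℝ) : |x ⬝ᵥ (A *ᵥ x)| ≤ |x| ⬝ᵥ (A *ᵥ |x|) := by
  simp only [dotProduct, mulVec, Finset.mul_sum, Pi.abs_apply]
  refine (abs_sum_le_sum_abs _ _).trans (sum_le_sum fun i _ => ?_)
  refine (abs_sum_le_sum_abs _ _).trans (sum_le_sum fun j _ => ?_)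
  rw [abs_mul, abs_mul, abs_of_nonneg (hA i j)]

namespace IsHermitian

variable [DecidableEq n]

lemma trace_pow_eq_sum_eigenvalues_pow {𝕜 : Type*} [RCLike 𝕜] {A : Matrix n n 𝕜}
    (hA : A.IsHermitian) (k : ℕ) : (A ^ k).trace = ∑ i, (hA.eigenvalues i : 𝕜) ^ k := by
  conv_lhs => rw [hA.spectral_theorem, ← map_pow, Unitary.conjStarAlgAut_apply, trace_mul_cycle,
    Unitary.coe_star_mul_self, one_mul, diagonal_pow, trace_diagonal]
  simp

variable {A : Matrix n n ℝ}

lemma dotProduct_eigenvectorBasis_self (hA : A.IsHermitian) (i : n) :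
    ⇑(hA.eigenvectorBasis i) ⬝ᵥ ⇑(hA.eigenvectorBasis i) = 1 := by
  have h := orthonormal_iff_ite.mp hA.eigenvectorBasis.orthonormal i i
  rwa [if_pos rfl, EuclideanSpace.inner_eq_star_dotProduct, star_trivial] at h

lemma dotProduct_mulVec_le (hA : A.IsHermitian) {μ : ℝ} (hμ : ∀ i, hA.eigenvalues i ≤ μ)
    (x : n → ℝ) : x ⬝ᵥ (A *ᵥ x) ≤ μ * (x ⬝ᵥ x) := by
  have hpsd : (algebraMap ℝ (Matrix n n ℝ) μ - A).PosSemidef := by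
    refine posSemidef_iff_isHermitian_and_spectrum_nonneg.2
      ⟨(IsSelfAdjoint.algebraMap _ (.all μ)).sub hA, ?_⟩
    rw [← spectrum.singleton_sub_eq, hA.spectrum_real_eq_range_eigenvalues]
    rintro _ ⟨_, rfl, _, ⟨i, rfl⟩, rfl⟩
    exact sub_nonneg.2 (hμ i)
  have h := hpsd.dotProduct_mulVec_nonneg x
  rw [star_trivial, sub_mulVec, dotProduct_sub, Algebra.algebraMap_eq_smul_one, smul_mulVec,
    one_mulVec, dotProduct_smul, smul_eq_mul] at h
  linarith

lemma neg_eigenvalues_le_of_nonneg (hA : A.IsHermitian) (hnonneg : ∀ i j, 0 ≤ A i j) {μ : ℝ}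
    (hμ : ∀ i, hA.eigenvalues i ≤ μ) (i : n) : -hA.eigenvalues i ≤ μ := by
  set v : n → ℝ := ⇑(hA.eigenvectorBasis i)
  have hv : v ⬝ᵥ v = 1 := hA.dotProduct_eigenvectorBasis_self i
  have hAv : v ⬝ᵥ (A *ᵥ v) = hA.eigenvalues i := by simpa using (hA.eigenvalues_eq i).symm
  have habs : |v| ⬝ᵥ |v| = v ⬝ᵥ v := sum_congr rfl fun j _ => abs_mul_abs_self (v j)
  calc -hA.eigenvalues i ≤ |v ⬝ᵥ (A *ᵥ v)| := hAv ▸ neg_le_abs _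
    _ ≤ |v| ⬝ᵥ (A *ᵥ |v|) := abs_dotProduct_mulVec_le_of_nonneg hnonneg v
    _ ≤ μ * (|v| ⬝ᵥ |v|) := hA.dotProduct_mulVec_le hμ |v|
    _ = μ := by rw [habs, hv, mul_one]

end IsHermitian

end Matrix

namespace SimpleGraph

variable {V α : Type*} (G : SimpleGraph V) [DecidableRel G.Adj]

lemma adjMatrix_nonneg [Zero α] [One α] [Preorder α] [ZeroLEOneClass α] (i j : V) :
    0 ≤ G.adjMatrix α i j := by
  rw [adjMatrix_apply]
  split_ifs
  exacts [zero_le_one, le_rfl]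

lemma adjMatrix_ne_zero [Fintype V] [MulZeroOneClass α] [Nontrivial α]
    (h : G.edgeFinset.Nonempty) : G.adjMatrix α ≠ 0 := by
  obtain ⟨e, he⟩ := h
  induction e using Sym2.ind with
  | _ a b =>
    rw [mem_edgeFinset, mem_edgeSet] at he
    intro h0
    simpa [he] using congrFun (congrFun h0 a) b

lemma trace_adjMatrix_pow_three_of_cliqueFree [Fintype V] [DecidableEq V] [Semiring α]
    (h : G.CliqueFree 3) : (G.adjMatrix α ^ 3).trace = 0 := by
  refine sum_eq_zero fun i _ => ?_
  rw [diag_apply, pow_succ', sq, adjMatrix_mul_apply]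
  refine sum_eq_zero fun j hj => ?_
  rw [adjMatrix_mul_apply]
  refine sum_eq_zero fun k hk => ?_
  rw [mem_neighborFinset] at hj hk
  have hki : ¬ G.Adj k i := fun hki =>
    h {i, j, k} (is3Clique_triple_iff.mpr ⟨hj, hki.symm, hk⟩)
  simp [hki]

end SimpleGraph

lemma Finset.exists_neg_and_exists_pos_of_sum_eq_zero {ι M : Type*} [Fintype ι] [AddCommGroup M]
    [LinearOrder M] [IsOrderedAddMonoid M] {f : ι → M} (hsum : ∑ i, f i = 0) (hf : f ≠ 0) :
    (∃ i, f i < 0) ∧ ∃ i, 0 < f i := by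
  obtain ⟨i, hi⟩ := Function.ne_iff.mp hf
  constructor
  · obtain ⟨j, -, hj⟩ := exists_pos_of_sum_zero_of_exists_nonzero (-f)
      (by simp [sum_neg_distrib, hsum]) ⟨i, mem_univ i, by simpa using hi⟩
    exact ⟨j, by simpa using hj⟩
  · obtain ⟨j, -, hj⟩ :=
      exists_pos_of_sum_zero_of_exists_nonzero f hsum ⟨i, mem_univ i, hi⟩
    exact ⟨j, hj⟩

lemma pow_three_le_mul_sum_sq_of_sum_pow_three_eq_zero {ι : Type*} [Fintype ι] {f : ι → ℝ}
    (h3 : ∑ i, f i ^ 3 = 0) {m : ℝ} (hm : ∀ i, m ≤ f i) {i₀ : ι} (hi₀ : 0 ≤ f i₀) :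
    f i₀ ^ 3 ≤ -m * ∑ i ∈ univ.filter (fun i => f i < 0), f i ^ 2 := by
  have hpos : f i₀ ^ 3 ≤ ∑ i ∈ univ.filter (fun i => ¬ f i < 0), f i ^ 3 :=
    single_le_sum (f := fun i => f i ^ 3)
      (fun i hi => pow_nonneg (not_lt.1 (mem_filter.1 hi).2) 3)
      (mem_filter.2 ⟨mem_univ _, not_lt.2 hi₀⟩)
  have hneg : m * ∑ i ∈ univ.filter (fun i => f i < 0), f i ^ 2 ≤
      ∑ i ∈ univ.filter (fun i => f i < 0), f i ^ 3 := by
    rw [mul_sum]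
    exact sum_le_sum fun i _ => by
      rw [pow_succ' (f i) 2]
      exact mul_le_mul_of_nonneg_right (hm i) (sq_nonneg _)
  rw [← sum_filter_add_sum_filter_not univ (fun i => f i < 0)] at h3
  linarith

theorem triangle_free_s_neg_ge_mu_sq
    {V : Type*} [Fintype V] [DecidableEq V] (G : SimpleGraph V)
    [DecidableRel G.Adj]
    (hA : (G.adjMatrix ℝ).IsHermitian)
    (htf : G.CliqueFree 3)
    (hedge : G.edgeFinset.Nonempty)
    (μ μn : ℝ)
    (hub : ∀ i, hA.eigenvalues i ≤ μ) (hμmem : ∃ i, hA.eigenvalues i = μ)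
    (hlb : ∀ i, μn ≤ hA.eigenvalues i) (hμnmem : ∃ i, hA.eigenvalues i = μn) :
    μ ^ 3 / |μn| ≤
      (∑ i ∈ univ.filter (fun i => hA.eigenvalues i < 0), (hA.eigenvalues i) ^ 2) ∧
    μ ^ 2 ≤ μ ^ 3 / |μn| := by
  obtain ⟨i₀, rfl⟩ := hμmem
  obtain ⟨j₀, rfl⟩ := hμnmem
  have hsum : ∑ i, hA.eigenvalues i = 0 := by
    simpa using hA.trace_eq_sum_eigenvalues.symm.trans (G.trace_adjMatrix ℝ)
  have hsum3 : ∑ i, hA.eigenvalues i ^ 3 = 0 := by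
    simpa using (hA.trace_pow_eq_sum_eigenvalues_pow 3).symm.trans
      (G.trace_adjMatrix_pow_three_of_cliqueFree htf)
  have hne : hA.eigenvalues ≠ 0 := fun h =>
    G.adjMatrix_ne_zero hedge (hA.eigenvalues_eq_zero_iff.1 h)
  obtain ⟨⟨i₁, hi₁⟩, i₂, hi₂⟩ := exists_neg_and_exists_pos_of_sum_eq_zero hsum hne
  have hμ : 0 < hA.eigenvalues i₀ := hi₂.trans_le (hub i₂)
  have hμn : hA.eigenvalues j₀ < 0 := (hlb i₁).trans_lt hi₁
  have hperron := hA.neg_eigenvalues_le_of_nonneg G.adjMatrix_nonneg hub j₀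
  have hcube := pow_three_le_mul_sum_sq_of_sum_pow_three_eq_zero hsum3 hlb hμ.le
  rw [abs_of_neg hμn]
  constructor
  · rw [div_le_iff₀ (neg_pos.2 hμn)]
    linarith
  · rw [le_div_iff₀ (neg_pos.2 hμn)]
    nlinarith
end

section
/- For a graph G with n vertices, m ≥ 1 edges, spectral radius μ, and s⁺ the sum of squares of positive adjacency eigenvalues: if 2m/(2m − s⁺) ≤ χ(G) and G satisfies ω(G) = χ(G), then n/(n − √(s⁺)) ≤ ω(G). -/
/-!
Evaluating the adjacency quadratic form at the all-ones vector gives `2m = 𝟙ᵀA𝟙 ≤ λ_max · n`, and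
every eigenvalue is at most `√s⁺`; hence `2m ≤ n√s⁺`. This is exactly what is needed for
`n / (n - √s⁺) ≤ 2m / (2m - s⁺)`, and the right-hand side is at most `χ = ω` by hypothesis.
-/

open Finset Matrix

namespace Matrix.IsHermitian

variable {n : Type*} [Fintype n] [DecidableEq n] {A : Matrix n n ℝ}

theorem dotProduct_mulVec_le_of_eigenvalues_le (hA : A.IsHermitian) {c : ℝ}
    (hc : ∀ i, hA.eigenvalues i ≤ c) (x : n → ℝ) : x ⬝ᵥ A *ᵥ x ≤ c * (x ⬝ᵥ x) := by
  set d := hA.eigenvalues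
  set U : Matrix n n ℝ := (hA.eigenvectorUnitary : Matrix n n ℝ)
  set y := Uᵀ *ᵥ x
  have hUUt : U * Uᵀ = 1 := by
    rw [← conjTranspose_eq_transpose_of_trivial, ← star_eq_conjTranspose]
    exact Unitary.mul_star_self_of_mem hA.eigenvectorUnitary.2
  have hAU : A = U * diagonal d * Uᵀ := by
    conv_lhs => rw [hA.spectral_theorem]
    simp [U, d, Unitary.conjStarAlgAut_apply, star_eq_conjTranspose]
  have hUy : U *ᵥ y = x := by rw [mulVec_mulVec, hUUt, one_mulVec]
  have hshift : ∀ w, x ⬝ᵥ U *ᵥ w = y ⬝ᵥ w := fun w => by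
    rw [dotProduct_mulVec, ← mulVec_transpose]
  have hquad : x ⬝ᵥ A *ᵥ x = ∑ i, d i * y i ^ 2 := by
    rw [hAU, ← mulVec_mulVec, ← mulVec_mulVec, hshift]
    simp only [dotProduct, mulVec_diagonal]
    exact sum_congr rfl fun i _ => by ring
  have hnorm : x ⬝ᵥ x = ∑ i, y i ^ 2 := by
    calc x ⬝ᵥ x = x ⬝ᵥ U *ᵥ y := by rw [hUy]
      _ = y ⬝ᵥ y := hshift y
      _ = ∑ i, y i ^ 2 := by simp only [dotProduct, sq]
  rw [hquad, hnorm, mul_sum]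
  exact sum_le_sum fun i _ => mul_le_mul_of_nonneg_right (hc i) (sq_nonneg _)

end Matrix.IsHermitian

theorem le_sqrt_sum_sq_filter_pos {ι : Type*} (s : Finset ι) (f : ι → ℝ) {j : ι} (hj : j ∈ s) :
    f j ≤ √(∑ i ∈ s with 0 < f i, f i ^ 2) := by
  rcases le_or_gt (f j) 0 with hneg | hpos
  · exact hneg.trans (Real.sqrt_nonneg _)
  · exact Real.le_sqrt_of_sq_le <|
      single_le_sum (f := fun i => f i ^ 2) (fun i _ => sq_nonneg _) (mem_filter.mpr ⟨hj, hpos⟩)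

theorem SimpleGraph.dotProduct_adjMatrix_mulVec_one {V : Type*} [Fintype V] (G : SimpleGraph V)
    [DecidableRel G.Adj] : (1 : V → ℝ) ⬝ᵥ G.adjMatrix ℝ *ᵥ 1 = 2 * #G.edgeFinset := by
  rw [dotProduct_comm, ← G.natCast_card_dart_eq_dotProduct, G.dart_card_eq_twice_card_edges]
  push_cast; ring

theorem div_sub_sqrt_le_div_sub {a b s : ℝ} (hs : 0 ≤ s) (hsb : √s < b) (hsa : s < a)
    (hab : a ≤ b * √s) : b / (b - √s) ≤ a / (a - s) := by
  have ht := Real.sqrt_nonneg s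
  have hts : √s ^ 2 = s := Real.sq_sqrt hs
  rw [div_le_div_iff₀ (by linarith) (by linarith)]
  nlinarith [mul_le_mul_of_nonneg_left hab ht]

theorem SimpleGraph.two_mul_card_edgeFinset_le_card_mul_sqrt {V : Type*} [Fintype V]
    [DecidableEq V] (G : SimpleGraph V) [DecidableRel G.Adj] (hA : (G.adjMatrix ℝ).IsHermitian) :
    2 * (#G.edgeFinset : ℝ) ≤
      Fintype.card V * √(∑ i ∈ univ with 0 < hA.eigenvalues i, hA.eigenvalues i ^ 2) := by
  have h := hA.dotProduct_mulVec_le_of_eigenvalues_le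
    (fun i => le_sqrt_sum_sq_filter_pos univ hA.eigenvalues (mem_univ i)) 1
  rw [G.dotProduct_adjMatrix_mulVec_one] at h
  simpa [mul_comm] using h

theorem weakly_perfect_clique_bound_general
    {V : Type*} [Fintype V] [DecidableEq V] (G : SimpleGraph V)
    [DecidableRel G.Adj]
    (hA : (G.adjMatrix ℝ).IsHermitian)
    (χ : ℕ)
    (hsplus_lt : (∑ i ∈ univ.filter (fun i => 0 < hA.eigenvalues i),
        (hA.eigenvalues i) ^ 2) < 2 * (G.edgeFinset.card : ℝ))
    (hsqrt_lt : Real.sqrt (∑ i ∈ univ.filter (fun i => 0 < hA.eigenvalues i),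
        (hA.eigenvalues i) ^ 2) < (Fintype.card V : ℝ))
    (hAndoLin : 2 * (G.edgeFinset.card : ℝ) /
        (2 * (G.edgeFinset.card : ℝ) -
          ∑ i ∈ univ.filter (fun i => 0 < hA.eigenvalues i),
            (hA.eigenvalues i) ^ 2) ≤ (χ : ℝ))
    (hperfect : G.cliqueNum = χ) :
    (Fintype.card V : ℝ) /
        ((Fintype.card V : ℝ) -
          Real.sqrt (∑ i ∈ univ.filter (fun i => 0 < hA.eigenvalues i),
            (hA.eigenvalues i) ^ 2)) ≤ (G.cliqueNum : ℝ) := by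
  have hs : 0 ≤ ∑ i ∈ univ with 0 < hA.eigenvalues i, hA.eigenvalues i ^ 2 :=
    sum_nonneg fun i _ => sq_nonneg _
  rw [hperfect]
  exact (div_sub_sqrt_le_div_sub hs hsqrt_lt hsplus_lt
    (G.two_mul_card_edgeFinset_le_card_mul_sqrt hA)).trans hAndoLin

theorem weakly_perfect_clique_bound
    {V : Type*} [Fintype V] [DecidableEq V] (G : SimpleGraph V)
    [DecidableRel G.Adj]
    (hA : (G.adjMatrix ℝ).IsHermitian)
    (hm : 1 ≤ G.edgeFinset.card)
    (χ : ℕ) (hchi : G.chromaticNumber = (χ : ℕ∞))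
    (hsplus_lt : (∑ i ∈ univ.filter (fun i => 0 < hA.eigenvalues i),
        (hA.eigenvalues i) ^ 2) < 2 * (G.edgeFinset.card : ℝ))
    (hsqrt_lt : Real.sqrt (∑ i ∈ univ.filter (fun i => 0 < hA.eigenvalues i),
        (hA.eigenvalues i) ^ 2) < (Fintype.card V : ℝ))
    (hAndoLin : 2 * (G.edgeFinset.card : ℝ) /
        (2 * (G.edgeFinset.card : ℝ) -
          ∑ i ∈ univ.filter (fun i => 0 < hA.eigenvalues i),
            (hA.eigenvalues i) ^ 2) ≤ (χ : ℝ))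
    (hperfect : G.cliqueNum = χ) :
    (Fintype.card V : ℝ) /
        ((Fintype.card V : ℝ) -
          Real.sqrt (∑ i ∈ univ.filter (fun i => 0 < hA.eigenvalues i),
            (hA.eigenvalues i) ^ 2)) ≤ (G.cliqueNum : ℝ) :=
  weakly_perfect_clique_bound_general G hA χ hsplus_lt hsqrt_lt hAndoLin hperfect
end

section
/- For any graph G with m ≥ 1 edges, 2m/(2m − μ²) ≤ ω(G), where μ is the spectral radius of the adjacency matrix and ω(G) is the clique number (Nikiforov's theorem, conjectured by Edwards and Elphick). -/
/-!
Let `x` be a unit eigenvector for `μ`. Then `μ = ∑ x_a x_b` over the `2m` ordered adjacent pairs,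
so Cauchy–Schwarz gives `μ² ≤ 2m ∑ x_a² x_b²`, and the right-hand sum is the adjacency form of the
probability vector `x²`. By the Motzkin–Straus inequality this form is at most `1 - 1/ω` on the
simplex, whence `μ² ≤ 2m (1 - 1/ω)`, which rearranges to the claim.

Motzkin–Straus is proved by induction on the size of the support. On a clique support it is
Cauchy–Schwarz. Otherwise two vertices `u`, `v` of the support are not adjacent, the form is affine
along `e_u - e_v`, and so moving all the mass of `v` onto `u` or of `u` onto `v` does not decrease
it while shrinking the support.
-/

open Finset Matrix

theorem div_sub_le_of_le_mul_one_sub_inv {M s ω : ℝ} (hM : 0 ≤ M) (hω : 0 < ω)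
    (h : s ≤ M * (1 - ω⁻¹)) : M / (M - s) ≤ ω := by
  rcases hM.eq_or_lt with rfl | hM
  · simpa using hω.le
  have hden : M / ω ≤ M - s := by rw [div_eq_mul_inv]; linarith
  rw [div_le_iff₀ ((div_pos hM hω).trans_le hden)]
  calc M = ω * (M / ω) := by field_simp
    _ ≤ ω * (M - s) := by gcongr

namespace Matrix.IsHermitian

variable {V : Type*} [Fintype V] [DecidableEq V] {A : Matrix V V ℝ} (hA : A.IsHermitian)

theorem sum_eigenvectorBasis_sq (i : V) : ∑ v, hA.eigenvectorBasis i v ^ 2 = 1 := by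
  rw [← EuclideanSpace.real_norm_sq_eq, hA.eigenvectorBasis.orthonormal.1 i, one_pow]

theorem eigenvalues_eq_dotProduct (i : V) :
    hA.eigenvalues i = ⇑(hA.eigenvectorBasis i) ⬝ᵥ A *ᵥ ⇑(hA.eigenvectorBasis i) := by
  simpa using hA.eigenvalues_eq i

end Matrix.IsHermitian

namespace SimpleGraph

theorem cliqueNum_pos {V : Type*} [Finite V] [Nonempty V] (G : SimpleGraph V) :
    0 < G.cliqueNum := by
  obtain ⟨v⟩ := ‹Nonempty V›
  have h := IsClique.card_le_cliqueNum (G := G) (t := {v}) (tc := by simp)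
  rwa [card_singleton] at h

variable {V : Type*} [Fintype V] (G : SimpleGraph V)

theorem sq_sum_le_cliqueNum_mul_sum_sq {y : V → ℝ} (hy : G.IsClique (Function.support y)) :
    (∑ v, y v) ^ 2 ≤ G.cliqueNum * ∑ v, y v ^ 2 := by
  classical
  set S : Finset V := {v | y v ≠ 0}
  have hS : G.IsClique (S : Set V) := by simpa [S, Function.support] using hy
  calc (∑ v, y v) ^ 2 = (∑ v ∈ S, y v) ^ 2 := by rw [sum_filter_ne_zero]
    _ ≤ #S * ∑ v ∈ S, y v ^ 2 := sq_sum_le_card_mul_sum_sq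
    _ ≤ G.cliqueNum * ∑ v, y v ^ 2 := by
      gcongr ?_ * ?_
      · exact_mod_cast hS.card_le_cliqueNum
      · exact sum_le_sum_of_subset_of_nonneg (subset_univ S) fun v _ _ => sq_nonneg (y v)

variable [DecidableRel G.Adj]

theorem dotProduct_adjMatrix_mulVec_comm (x y : V → ℝ) :
    x ⬝ᵥ G.adjMatrix ℝ *ᵥ y = y ⬝ᵥ G.adjMatrix ℝ *ᵥ x := by
  rw [dotProduct_mulVec, ← mulVec_transpose, transpose_adjMatrix, dotProduct_comm]

theorem sq_dotProduct_adjMatrix_mulVec_le [DecidableEq V] (x : V → ℝ) :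
    (x ⬝ᵥ G.adjMatrix ℝ *ᵥ x) ^ 2 ≤
      2 * #G.edgeFinset * ((x ^ 2) ⬝ᵥ G.adjMatrix ℝ *ᵥ (x ^ 2)) := by
  set P : Finset (V × V) := {p | G.Adj p.1 p.2}
  have hsum : ∀ y z : V → ℝ, y ⬝ᵥ G.adjMatrix ℝ *ᵥ z = ∑ p ∈ P, y p.1 * z p.2 := by
    intro y z
    rw [dotProduct_mulVec_adjMatrix, sum_filter, Fintype.sum_prod_type]
  have hcard : (#P : ℝ) = 2 * #G.edgeFinset := by
    rw [← Nat.cast_ofNat, ← Nat.cast_mul, ← dart_card_eq_twice_card_edges,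
      G.natCast_card_dart_eq_dotProduct, dotProduct_comm, hsum]
    simp
  rw [hsum, hsum, ← hcard]
  simpa [mul_pow] using sq_sum_le_card_mul_sum_sq (s := P) (f := fun p => x p.1 * x p.2)

theorem dotProduct_adjMatrix_mulVec_of_isClique {y : V → ℝ}
    (hy : G.IsClique (Function.support y)) :
    y ⬝ᵥ G.adjMatrix ℝ *ᵥ y = (∑ v, y v) ^ 2 - ∑ v, y v ^ 2 := by
  classical
  have hterm : ∀ a b, (if G.Adj a b then y a * y b else 0) =
      y a * y b - if a = b then y a * y b else 0 := by
    intro a b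
    by_cases hab : a = b
    · simp [hab]
    by_cases hya : y a = 0
    · simp [hya]
    by_cases hyb : y b = 0
    · simp [hyb]
    simp [hy hya hyb hab, hab]
  simp only [dotProduct_mulVec_adjMatrix, hterm, sum_sub_distrib, sum_ite_eq, mem_univ, if_true,
    sq, sum_mul_sum]

theorem dotProduct_adjMatrix_mulVec_le_of_isClique {y : V → ℝ}
    (hy : G.IsClique (Function.support y)) :
    y ⬝ᵥ G.adjMatrix ℝ *ᵥ y ≤ (1 - (G.cliqueNum : ℝ)⁻¹) * (∑ v, y v) ^ 2 := by
  have h : (∑ v, y v) ^ 2 / G.cliqueNum ≤ ∑ v, y v ^ 2 :=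
    div_le_of_le_mul₀ (Nat.cast_nonneg _) (sum_nonneg fun v _ => sq_nonneg (y v))
      (by rw [mul_comm]; exact G.sq_sum_le_cliqueNum_mul_sum_sq hy)
  rw [G.dotProduct_adjMatrix_mulVec_of_isClique hy]
  linarith [div_eq_inv_mul ((∑ v, y v) ^ 2) (G.cliqueNum : ℝ)]

theorem dotProduct_adjMatrix_mulVec_add_smul_single_sub_single [DecidableEq V] {u v : V}
    (hnadj : ¬G.Adj u v) (y : V → ℝ) (t : ℝ) :
    (y + t • (Pi.single u 1 - Pi.single v 1)) ⬝ᵥ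
        G.adjMatrix ℝ *ᵥ (y + t • (Pi.single u 1 - Pi.single v 1)) =
      y ⬝ᵥ G.adjMatrix ℝ *ᵥ y + 2 * t * ((G.adjMatrix ℝ *ᵥ y) u - (G.adjMatrix ℝ *ᵥ y) v) := by
  simp only [mulVec_add, add_dotProduct, dotProduct_add]
  rw [G.dotProduct_adjMatrix_mulVec_comm y (t • _)]
  simp only [mulVec_smul, mulVec_sub, smul_dotProduct, sub_dotProduct, mulVec_single,
    single_dotProduct]
  simp [hnadj, G.adj_comm v u]
  ring

theorem exists_support_ncard_lt_of_not_adj {y : V → ℝ} (hy : 0 ≤ y) {u v : V} (hu : y u ≠ 0)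
    (hv : y v ≠ 0) (huv : u ≠ v) (hnadj : ¬G.Adj u v)
    (hslope : (G.adjMatrix ℝ *ᵥ y) v ≤ (G.adjMatrix ℝ *ᵥ y) u) :
    ∃ y' : V → ℝ, 0 ≤ y' ∧ ∑ w, y' w = ∑ w, y w ∧
      (Function.support y').ncard < (Function.support y).ncard ∧
      y ⬝ᵥ G.adjMatrix ℝ *ᵥ y ≤ y' ⬝ᵥ G.adjMatrix ℝ *ᵥ y' := by
  classical
  set y' : V → ℝ := y + y v • (Pi.single u 1 - Pi.single v 1) with hy'
  have hval : ∀ w, y' w = if w = u then y u + y v else if w = v then 0 else y w := by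
    intro w
    by_cases hwu : w = u
    · simp [hy', hwu, huv]
    by_cases hwv : w = v
    · simp [hy', hwv, huv.symm]
    simp [hy', hwu, hwv]
  refine ⟨y', fun w => ?_, ?_, ?_, ?_⟩
  · rw [hval]
    split_ifs
    · exact add_nonneg (hy u) (hy v)
    · exact le_rfl
    · exact hy w
  · simp [hy', sum_add_distrib, ← mul_sum]
  · refine Set.ncard_lt_ncard
      (ssubset_of_subset_of_ssubset ?_ (Set.sdiff_singleton_ssubset.2 hv))
    intro w hw
    simp only [Function.mem_support, hval] at hw
    split_ifs at hw with hwu hwv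
    · exact ⟨hwu ▸ hu, hwu ▸ huv⟩
    · exact absurd rfl hw
    · exact ⟨hw, hwv⟩
  · rw [G.dotProduct_adjMatrix_mulVec_add_smul_single_sub_single hnadj]
    nlinarith [mul_nonneg (hy v) (sub_nonneg.2 hslope)]

theorem dotProduct_adjMatrix_mulVec_le (y : V → ℝ) (hy : 0 ≤ y) :
    y ⬝ᵥ G.adjMatrix ℝ *ᵥ y ≤ (1 - (G.cliqueNum : ℝ)⁻¹) * (∑ v, y v) ^ 2 := by
  induction hn : (Function.support y).ncard using Nat.strong_induction_on generalizing y with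
  | _ n ih =>
  by_cases hclique : G.IsClique (Function.support y)
  · exact G.dotProduct_adjMatrix_mulVec_le_of_isClique hclique
  obtain ⟨u, hu, v, hv, huv, hnadj⟩ :
      ∃ u, y u ≠ 0 ∧ ∃ v, y v ≠ 0 ∧ u ≠ v ∧ ¬G.Adj u v := by
    simpa [IsClique, Set.Pairwise] using hclique
  obtain ⟨y', hy', hsum, hlt, hle⟩ :
      ∃ y' : V → ℝ, 0 ≤ y' ∧ ∑ w, y' w = ∑ w, y w ∧
        (Function.support y').ncard < (Function.support y).ncard ∧
        y ⬝ᵥ G.adjMatrix ℝ *ᵥ y ≤ y' ⬝ᵥ G.adjMatrix ℝ *ᵥ y' := by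
    rcases le_total ((G.adjMatrix ℝ *ᵥ y) v) ((G.adjMatrix ℝ *ᵥ y) u) with h | h
    · exact G.exists_support_ncard_lt_of_not_adj hy hu hv huv hnadj h
    · exact G.exists_support_ncard_lt_of_not_adj hy hv hu huv.symm (by rwa [adj_comm]) h
  calc y ⬝ᵥ G.adjMatrix ℝ *ᵥ y ≤ y' ⬝ᵥ G.adjMatrix ℝ *ᵥ y' := hle
    _ ≤ (1 - (G.cliqueNum : ℝ)⁻¹) * (∑ v, y v) ^ 2 := hsum ▸ ih _ (hn ▸ hlt) y' hy' rfl

end SimpleGraph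

theorem nikiforov_bound_general
    {V : Type*} [Fintype V] [DecidableEq V] (G : SimpleGraph V)
    [DecidableRel G.Adj]
    (hA : (G.adjMatrix ℝ).IsHermitian)
    (μ : ℝ) (hmem : ∃ i, hA.eigenvalues i = μ) :
    2 * (G.edgeFinset.card : ℝ) / (2 * (G.edgeFinset.card : ℝ) - μ ^ 2) ≤
      (G.cliqueNum : ℝ) := by
  obtain ⟨i, rfl⟩ := hmem
  have : Nonempty V := ⟨i⟩
  set x : V → ℝ := ⇑(hA.eigenvectorBasis i)
  have hx : ∑ v, (x ^ 2) v = 1 := hA.sum_eigenvectorBasis_sq i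
  refine div_sub_le_of_le_mul_one_sub_inv (by positivity) (mod_cast G.cliqueNum_pos) ?_
  calc hA.eigenvalues i ^ 2 = (x ⬝ᵥ G.adjMatrix ℝ *ᵥ x) ^ 2 := by
        rw [hA.eigenvalues_eq_dotProduct]
    _ ≤ 2 * #G.edgeFinset * ((x ^ 2) ⬝ᵥ G.adjMatrix ℝ *ᵥ (x ^ 2)) :=
        G.sq_dotProduct_adjMatrix_mulVec_le x
    _ ≤ 2 * #G.edgeFinset * ((1 - (G.cliqueNum : ℝ)⁻¹) * (∑ v, (x ^ 2) v) ^ 2) := by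
        gcongr
        exact G.dotProduct_adjMatrix_mulVec_le _ (fun v => sq_nonneg (x v))
    _ = 2 * #G.edgeFinset * (1 - (G.cliqueNum : ℝ)⁻¹) := by rw [hx, one_pow, mul_one]

theorem nikiforov_bound
    {V : Type*} [Fintype V] [DecidableEq V] (G : SimpleGraph V)
    [DecidableRel G.Adj]
    (hA : (G.adjMatrix ℝ).IsHermitian)
    (hm : 1 ≤ G.edgeFinset.card)
    (μ : ℝ) (hub : ∀ i, hA.eigenvalues i ≤ μ) (hmem : ∃ i, hA.eigenvalues i = μ) :
    2 * (G.edgeFinset.card : ℝ) / (2 * (G.edgeFinset.card : ℝ) - μ ^ 2) ≤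
      (G.cliqueNum : ℝ) :=
  nikiforov_bound_general G hA μ hmem
end

section
/- For any graph G on n vertices with average degree d = 2m/n, n/(n − d) ≤ ω(G) (concise Turán theorem). -/
/-!
With `ω = G.cliqueNum`, the graph `G` has no `(ω + 1)`-clique, so by Turán's theorem it has at
most as many edges as the Turán graph `T(n, ω)`, i.e. `2 ω m ≤ (ω - 1) n²`. Dividing by `ω n`
gives `n - d ≥ n / ω`, which is the claim.
-/

open Finset Fintype

namespace SimpleGraph

section CliqueNum

variable {α : Type*} [Finite α] (G : SimpleGraph α)

lemma cliqueFree_cliqueNum_succ : G.CliqueFree (G.cliqueNum + 1) := fun s hs ↦ by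
  have := hs.isClique.card_le_cliqueNum
  rw [hs.card_eq] at this
  omega

lemma cliqueNum_pos_s16 [Nonempty α] : 0 < G.cliqueNum := by
  obtain ⟨v⟩ := ‹Nonempty α›
  exact Nat.lt_of_lt_of_le Nat.one_pos
    (by simpa using IsClique.card_le_cliqueNum (G := G) (t := {v}) (tc := by simp))

end CliqueNum

variable {V : Type*} [Fintype V] {G : SimpleGraph V} [DecidableRel G.Adj] {r : ℕ}

theorem CliqueFree.two_mul_mul_card_edgeFinset_le (cf : G.CliqueFree (r + 1)) :
    2 * r * #G.edgeFinset ≤ (r - 1) * card V ^ 2 := by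
  rcases r.eq_zero_or_pos with rfl | hr
  · simp
  obtain ⟨H, _, maxH⟩ := exists_isTuranMaximal (V := V) hr
  have turanIso := (isTuranMaximal_iff_nonempty_iso_turanGraph hr).mp maxH
  calc 2 * r * #G.edgeFinset ≤ 2 * r * #H.edgeFinset := Nat.mul_le_mul_left _ (maxH.2 cf)
    _ = 2 * r * #(turanGraph (card V) r).edgeFinset := by rw [turanIso.some.card_edgeFinset_eq]
    _ ≤ (r - 1) * card V ^ 2 := mul_card_edgeFinset_turanGraph_le

end SimpleGraph

open SimpleGraph

theorem turan_concise_general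
    {V : Type*} [Fintype V] [Nonempty V] (G : SimpleGraph V)
    [DecidableRel G.Adj] :
    (Fintype.card V : ℝ) /
        ((Fintype.card V : ℝ) -
          2 * (G.edgeFinset.card : ℝ) / (Fintype.card V : ℝ)) ≤
      (G.cliqueNum : ℝ) := by
  set n := (card V : ℝ)
  set m := (#G.edgeFinset : ℝ)
  set r := (G.cliqueNum : ℝ)
  have hn : 0 < n := Nat.cast_pos.2 card_pos
  have hr : 0 < r := Nat.cast_pos.2 G.cliqueNum_pos_s16
  have hedges : 2 * r * m ≤ (r - 1) * n ^ 2 := by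
    have := G.cliqueFree_cliqueNum_succ.two_mul_mul_card_edgeFinset_le
    rw [← Nat.cast_le (α := ℝ)] at this
    push_cast [Nat.cast_sub (Nat.one_le_iff_ne_zero.2 G.cliqueNum_pos_s16.ne')] at this
    exact this
  have hden : n / r ≤ n - 2 * m / n := by
    rw [div_le_iff₀ hr, sub_mul, le_sub_iff_add_le, div_mul_eq_mul_div, ← le_sub_iff_add_le',
      div_le_iff₀ hn]
    linarith
  calc n / (n - 2 * m / n) ≤ n / (n / r) := div_le_div_of_nonneg_left hn.le (by positivity) hden
    _ = r := by field_simp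

theorem turan_concise
    {V : Type*} [Fintype V] [DecidableEq V] [Nonempty V] (G : SimpleGraph V)
    [DecidableRel G.Adj] :
    (Fintype.card V : ℝ) /
        ((Fintype.card V : ℝ) -
          2 * (G.edgeFinset.card : ℝ) / (Fintype.card V : ℝ)) ≤
      (G.cliqueNum : ℝ) :=
  turan_concise_general G
end

section
/- Motzkin–Straus inequality: for any graph G with clique number ω and any nonnegative vector (p₁,...,pₙ) with Σ pᵢ = 1, Σ_{i∼j, i<j} pᵢ pⱼ ≤ (ω − 1)/(2ω). -/
/-!
For non-adjacent `i` and `j` the form `p ⬝ᵥ A *ᵥ p` (`A` the adjacency matrix) has no quadratic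
term along `e_j - e_i`, so moving all the mass of `p` at `i` onto `j`, or vice versa, does not
decrease it. Doing so repeatedly shrinks the support of `p` until it is a clique `K`. There the form
equals `(∑ p)² - ∑ p²`, and Cauchy–Schwarz gives `∑ p² ≥ (∑ p)² / |K| ≥ (∑ p)² / ω`.
-/

open Finset Matrix

theorem Matrix.IsSymm.add_dotProduct_mulVec_add {n R : Type*} [Fintype n] [CommSemiring R]
    {A : Matrix n n R} (hA : A.IsSymm) (x y : n → R) :
    (x + y) ⬝ᵥ A *ᵥ (x + y) = x ⬝ᵥ A *ᵥ x + 2 * (y ⬝ᵥ A *ᵥ x) + y ⬝ᵥ A *ᵥ y := by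
  have hxy : x ⬝ᵥ A *ᵥ y = y ⬝ᵥ A *ᵥ x := by
    rw [dotProduct_mulVec, dotProduct_comm, ← vecMul_transpose, hA.eq]
  rw [mulVec_add, dotProduct_add, add_dotProduct, add_dotProduct, hxy]
  ring

section MoveMass

variable {V R : Type*} [DecidableEq V] [Ring R]

def moveMass (p : V → R) (i j : V) : V → R :=
  p + p i • (Pi.single j 1 - Pi.single i 1)

theorem moveMass_apply (p : V → R) {i j : V} (hij : i ≠ j) (k : V) :
    moveMass p i j k = if k = i then 0 else if k = j then p j + p i else p k := by
  by_cases hki : k = i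
  · subst hki; simp [moveMass, hij.symm]
  · by_cases hkj : k = j
    · subst hkj; simp [moveMass, hki]
    · simp [moveMass, hki, hkj]

theorem sum_moveMass [Fintype V] (p : V → R) (i j : V) :
    ∑ k, moveMass p i j k = ∑ k, p k := by
  simp [moveMass, sum_add_distrib, ← mul_sum, sum_sub_distrib]

theorem moveMass_nonneg [PartialOrder R] [IsOrderedRing R] {p : V → R} (hp : 0 ≤ p)
    (i j : V) : 0 ≤ moveMass p i j := by
  intro k
  by_cases hij : i = j
  · simpa [moveMass, hij] using hp k
  rw [Pi.zero_apply, moveMass_apply p hij k]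
  split_ifs
  exacts [le_rfl, add_nonneg (hp j) (hp i), hp k]

theorem support_moveMass_ssubset {p : V → R} {i j : V} (hij : i ≠ j) (hi : p i ≠ 0)
    (hj : p j ≠ 0) : Function.support (moveMass p i j) ⊂ Function.support p := by
  refine ssubset_of_subset_not_subset (fun k hk => ?_) fun h => h hi ?_
  · rw [Function.mem_support, moveMass_apply p hij k] at hk
    split_ifs at hk with hki hkj
    exacts [absurd rfl hk, hkj ▸ hj, hk]
  · simp [moveMass_apply p hij i]

end MoveMass

namespace SimpleGraph

theorem one_le_cliqueNum {V : Type*} [Finite V] [Nonempty V] (G : SimpleGraph V) :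
    1 ≤ G.cliqueNum := by
  obtain ⟨v⟩ := ‹Nonempty V›
  simpa using IsClique.card_le_cliqueNum (G := G) (t := {v}) (tc := by simp)

variable {V R : Type*} [Fintype V] (G : SimpleGraph V) [DecidableRel G.Adj]

theorem single_sub_single_dotProduct_adjMatrix_mulVec [DecidableEq V] [Ring R] {i j : V}
    (h : ¬ G.Adj i j) :
    (Pi.single j 1 - Pi.single i 1) ⬝ᵥ G.adjMatrix R *ᵥ (Pi.single j 1 - Pi.single i 1) = 0 := by
  simp [mulVec_sub, sub_dotProduct, dotProduct_sub, adjMatrix_apply, h, G.adj_comm j i]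

theorem moveMass_dotProduct_adjMatrix_mulVec [DecidableEq V] [CommRing R] (p : V → R)
    {i j : V} (h : ¬ G.Adj i j) :
    moveMass p i j ⬝ᵥ G.adjMatrix R *ᵥ moveMass p i j =
      p ⬝ᵥ G.adjMatrix R *ᵥ p + 2 * p i * ((G.adjMatrix R *ᵥ p) j - (G.adjMatrix R *ᵥ p) i) := by
  rw [moveMass, G.isSymm_adjMatrix.add_dotProduct_mulVec_add]
  simp only [mulVec_smul, smul_dotProduct, dotProduct_smul,
    G.single_sub_single_dotProduct_adjMatrix_mulVec h, sub_dotProduct, single_dotProduct]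
  simp only [smul_eq_mul, one_mul, mul_zero, add_zero]
  ring

theorem exists_isClique_support_le [DecidableEq V] [CommRing R] [LinearOrder R]
    [IsOrderedRing R] (p : V → R) (hp : 0 ≤ p) :
    ∃ q : V → R, 0 ≤ q ∧ ∑ i, q i = ∑ i, p i ∧ G.IsClique (Function.support q) ∧
      p ⬝ᵥ G.adjMatrix R *ᵥ p ≤ q ⬝ᵥ G.adjMatrix R *ᵥ q := by
  induction h : (Function.support p).ncard using Nat.strong_induction_on generalizing p with
  | _ n ih =>
  by_cases hcl : G.IsClique (Function.support p)
  · exact ⟨p, hp, rfl, hcl, le_rfl⟩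
  obtain ⟨i, hi, j, hj, hij, hadj⟩ :
      ∃ i ∈ Function.support p, ∃ j ∈ Function.support p, i ≠ j ∧ ¬ G.Adj i j := by
    simpa [IsClique, Set.Pairwise] using hcl
  wlog hle : (G.adjMatrix R *ᵥ p) i ≤ (G.adjMatrix R *ᵥ p) j generalizing i j
  · exact this j hj i hi hij.symm (fun h => hadj h.symm) (le_of_not_ge hle)
  have hlt : (Function.support (moveMass p i j)).ncard < n :=
    h ▸ Set.ncard_lt_ncard (support_moveMass_ssubset hij hi hj) (Set.toFinite _)
  obtain ⟨q, hq, hsum, hclq, hle'⟩ := ih _ hlt (moveMass p i j) (moveMass_nonneg hp i j) rfl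
  refine ⟨q, hq, hsum.trans (sum_moveMass p i j), hclq, le_trans ?_ hle'⟩
  rw [G.moveMass_dotProduct_adjMatrix_mulVec p hadj]
  exact le_add_of_nonneg_right (mul_nonneg (mul_nonneg zero_le_two (hp i)) (sub_nonneg.2 hle))

theorem dotProduct_adjMatrix_mulVec_of_isClique_support [CommRing R] {p : V → R}
    (hp : G.IsClique (Function.support p)) :
    p ⬝ᵥ G.adjMatrix R *ᵥ p = (∑ i, p i) ^ 2 - ∑ i, p i ^ 2 := by
  classical
  have hterm : ∀ i j, (if G.Adj i j then p i * p j else 0) =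
      p i * p j - if i = j then p i * p j else 0 := by
    intro i j
    by_cases hij : i = j
    · subst hij; simp
    by_cases hadj : G.Adj i j
    · simp [hadj, hij]
    have : p i * p j = 0 := by
      by_contra h
      exact hadj (hp (left_ne_zero_of_mul h) (right_ne_zero_of_mul h) hij)
    simp [hadj, hij, this]
  simp only [dotProduct_mulVec_adjMatrix, hterm, sum_sub_distrib, sum_ite_eq, mem_univ, if_true,
    sq, sum_mul_sum]

theorem dotProduct_adjMatrix_mulVec_le_of_isClique_support [Field R] [LinearOrder R]
    [IsStrictOrderedRing R] {p : V → R} (hp : G.IsClique (Function.support p)) :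
    p ⬝ᵥ G.adjMatrix R *ᵥ p ≤ (1 - 1 / G.cliqueNum) * (∑ i, p i) ^ 2 := by
  classical
  set s := univ.filter (p · ≠ 0)
  have hs : G.IsClique (s : Set V) := by simpa [s, Function.support] using hp
  have hcs : (∑ i, p i) ^ 2 ≤ G.cliqueNum * ∑ i, p i ^ 2 :=
    calc (∑ i, p i) ^ 2 = (∑ i ∈ s, p i) ^ 2 := by rw [sum_filter_ne_zero]
      _ ≤ #s * ∑ i ∈ s, p i ^ 2 := sq_sum_le_card_mul_sum_sq
      _ = #s * ∑ i, p i ^ 2 := by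
        rw [sum_filter_of_ne fun i _ h => left_ne_zero_of_mul (pow_two (p i) ▸ h)]
      _ ≤ G.cliqueNum * ∑ i, p i ^ 2 := by
        gcongr
        exact hs.card_le_cliqueNum
  rw [G.dotProduct_adjMatrix_mulVec_of_isClique_support hp, sub_mul, one_mul]
  rcases (Nat.cast_nonneg (α := R) G.cliqueNum).eq_or_lt with hω | hω
  · simp only [← hω, div_zero, zero_mul, sub_zero, sub_le_self_iff]
    positivity
  · have : 1 / (G.cliqueNum : R) * (∑ i, p i) ^ 2 ≤ ∑ i, p i ^ 2 := by
      rwa [one_div_mul_eq_div, div_le_iff₀' hω]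
    linarith

theorem dotProduct_adjMatrix_mulVec_le_s18 [Field R] [LinearOrder R] [IsStrictOrderedRing R]
    {p : V → R} (hp : 0 ≤ p) :
    p ⬝ᵥ G.adjMatrix R *ᵥ p ≤ (1 - 1 / G.cliqueNum) * (∑ i, p i) ^ 2 := by
  classical
  obtain ⟨q, -, hsum, hq, hle⟩ := G.exists_isClique_support_le p hp
  exact hle.trans (hsum ▸ G.dotProduct_adjMatrix_mulVec_le_of_isClique_support hq)

end SimpleGraph

theorem motzkin_straus_general
    {V : Type*} [Fintype V] [Nonempty V] (G : SimpleGraph V)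
    [DecidableRel G.Adj]
    (p : V → ℝ) (hp : ∀ i, 0 ≤ p i) (hsum : ∑ i, p i = 1) :
    (∑ i, ∑ j ∈ univ.filter (fun j => G.Adj i j), p i * p j) / 2 ≤
      ((G.cliqueNum : ℝ) - 1) / (2 * (G.cliqueNum : ℝ)) := by
  have hω : (0 : ℝ) < G.cliqueNum := by exact_mod_cast G.one_le_cliqueNum
  have hQ : ∑ i, ∑ j ∈ univ.filter (fun j => G.Adj i j), p i * p j ≤ 1 - 1 / G.cliqueNum := by
    simpa [hsum, SimpleGraph.dotProduct_mulVec_adjMatrix, sum_filter]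
      using G.dotProduct_adjMatrix_mulVec_le_s18 (R := ℝ) hp
  calc _ ≤ (1 - 1 / (G.cliqueNum : ℝ)) / 2 := by gcongr
    _ = _ := by field_simp

theorem motzkin_straus
    {V : Type*} [Fintype V] [DecidableEq V] [Nonempty V] (G : SimpleGraph V)
    [DecidableRel G.Adj]
    (p : V → ℝ) (hp : ∀ i, 0 ≤ p i) (hsum : ∑ i, p i = 1) :
    (∑ i, ∑ j ∈ univ.filter (fun j => G.Adj i j), p i * p j) / 2 ≤
      ((G.cliqueNum : ℝ) - 1) / (2 * (G.cliqueNum : ℝ)) :=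
  motzkin_straus_general G p hp hsum
end
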